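/- arXiv:1412.0588 — 5 statements merged into one kernel-verified Lean document; each statement's English description precedes it below -/
import Mathlib

section
/- Fix p > 0 with p ≠ 2 potentially, and an n×d matrix A of full column rank. If v and w are positive weight vectors with v_i ≈_α w_i for all i (α ≥ 1), then for each row i, (a_iᵀ(AᵀV^{1−2/p}A)⁻¹a_i)^{p/2} ≈_{α^{|p/2−1|}} (a_iᵀ(AᵀW^{1−2/p}A)⁻¹a_i)^{p/2}, where V, W are the diagonal matrices of v, w. -/
/-!
Raising `v ≈_α w` to the power `q = 1 - 2/p` gives `v^q ≈_{α^|q|} w^q` entrywise, hence the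
quadratic forms of `Aᵀ diag(v^q) A` and `Aᵀ diag(w^q) A` are comparable with the same constant.
Comparability passes to the inverses because `a ⬝ M⁻¹ a = max_x (2 a ⬝ x - x ⬝ M x)`, and raising
to the power `p/2` turns the constant into `α ^ (|1 - 2/p| * p/2) = α ^ |p/2 - 1|`.
-/

open Matrix

/-- `Approx α x y` is `x ≈_α y`. -/
def Approx (α x y : ℝ) : Prop := 1 / α * x ≤ y ∧ y ≤ α * x

namespace Approx

variable {α x y : ℝ}

lemma iff_le_mul (hα : 0 < α) : Approx α x y ↔ x ≤ α * y ∧ y ≤ α * x := by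
  rw [Approx, one_div, inv_mul_le_iff₀ hα]

lemma sum {ι : Type*} (s : Finset ι) {f g : ι → ℝ} (h : ∀ i ∈ s, Approx α (f i) (g i)) :
    Approx α (∑ i ∈ s, f i) (∑ i ∈ s, g i) := by
  constructor <;> rw [Finset.mul_sum] <;> refine Finset.sum_le_sum fun i hi => ?_
  exacts [(h i hi).1, (h i hi).2]

lemma mul_right (h : Approx α x y) {r : ℝ} (hr : 0 ≤ r) : Approx α (x * r) (y * r) := by
  constructor <;> rw [← mul_assoc] <;> gcongr
  exacts [h.1, h.2]

lemma inv (hα : 0 < α) (hx : 0 < x) (hy : 0 < y) (h : Approx α x y) : Approx α x⁻¹ y⁻¹ := by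
  rw [iff_le_mul hα] at h ⊢
  constructor
  · rw [← div_eq_mul_inv, le_div_iff₀ hy, inv_mul_le_iff₀ hx, mul_comm]
    exact h.2
  · rw [← div_eq_mul_inv, le_div_iff₀ hx, inv_mul_le_iff₀ hy, mul_comm]
    exact h.1

lemma rpow_of_nonneg (hα : 0 < α) (hx : 0 ≤ x) (hy : 0 ≤ y) {q : ℝ} (hq : 0 ≤ q)
    (h : Approx α x y) : Approx (α ^ q) (x ^ q) (y ^ q) := by
  constructor
  · calc 1 / α ^ q * x ^ q = (1 / α * x) ^ q := by
          rw [Real.mul_rpow (by positivity) hx, Real.div_rpow zero_le_one hα.le, Real.one_rpow]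
      _ ≤ y ^ q := Real.rpow_le_rpow (by positivity) h.1 hq
  · calc y ^ q ≤ (α * x) ^ q := Real.rpow_le_rpow hy h.2 hq
      _ = α ^ q * x ^ q := Real.mul_rpow hα.le hx

lemma rpow (hα : 0 < α) (hx : 0 < x) (hy : 0 < y) (q : ℝ) (h : Approx α x y) :
    Approx (α ^ |q|) (x ^ q) (y ^ q) := by
  rcases le_or_gt 0 q with hq | hq
  · rw [abs_of_nonneg hq]
    exact h.rpow_of_nonneg hα hx.le hy.le hq
  · rw [abs_of_neg hq, ← neg_neg q, Real.rpow_neg hx.le, Real.rpow_neg hy.le, neg_neg]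
    exact (h.rpow_of_nonneg hα hx.le hy.le (neg_nonneg.mpr hq.le)).inv (by positivity)
      (by positivity) (by positivity)

end Approx

lemma Matrix.mulVec_injective_of_rank_eq_card {K m n : Type*} [Field K] [Fintype n]
    {A : Matrix m n K} (hA : A.rank = Fintype.card n) : Function.Injective A.mulVec :=
  mulVec_injective_iff.mpr <| linearIndependent_iff_card_eq_finrank_span.mpr <| by
    rw [Set.finrank, ← rank_eq_finrank_span_cols, hA]

lemma Matrix.dotProduct_transpose_mul_diagonal_mul_mulVec {R m n : Type*} [CommSemiring R]
    [Fintype m] [Fintype n] [DecidableEq m] (A : Matrix m n R) (D : m → R) (x : n → R) :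
    x ⬝ᵥ (Aᵀ * diagonal D * A) *ᵥ x = ∑ i, D i * (A *ᵥ x) i ^ 2 := by
  rw [← mulVec_mulVec, ← mulVec_mulVec, dotProduct_mulVec, vecMul_transpose]
  simp only [dotProduct, mulVec_diagonal]
  exact Finset.sum_congr rfl fun i _ => by ring

lemma Matrix.approx_dotProduct_transpose_mul_diagonal_mul_mulVec {m n : Type*} [Fintype m]
    [Fintype n] [DecidableEq m] (A : Matrix m n ℝ) {c : ℝ} {D E : m → ℝ}
    (h : ∀ i, Approx c (E i) (D i)) (x : n → ℝ) :
    Approx c (x ⬝ᵥ (Aᵀ * diagonal E * A) *ᵥ x) (x ⬝ᵥ (Aᵀ * diagonal D * A) *ᵥ x) := by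
  simp only [dotProduct_transpose_mul_diagonal_mul_mulVec]
  exact Approx.sum _ fun i _ => (h i).mul_right (sq_nonneg _)

lemma Matrix.posDef_transpose_mul_diagonal_mul {m n : Type*} [Fintype m] [Fintype n]
    [DecidableEq m] {A : Matrix m n ℝ} (hA : Function.Injective A.mulVec) {D : m → ℝ}
    (hD : ∀ i, 0 < D i) : (Aᵀ * diagonal D * A).PosDef := by
  simpa [conjTranspose_eq_transpose_of_trivial] using
    (PosDef.diagonal hD).conjTranspose_mul_mul_same hA

namespace Matrix.PosDef

variable {n : Type*} [Fintype n] [DecidableEq n]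

lemma dotProduct_inv_mulVec_nonneg {M : Matrix n n ℝ} (hM : M.PosDef) (a : n → ℝ) :
    0 ≤ a ⬝ᵥ M⁻¹ *ᵥ a := by
  simpa using hM.posSemidef.inv.dotProduct_mulVec_nonneg a

lemma two_mul_dotProduct_sub_le_dotProduct_inv_mulVec {M : Matrix n n ℝ} (hM : M.PosDef)
    (a x : n → ℝ) : 2 * (a ⬝ᵥ x) - x ⬝ᵥ M *ᵥ x ≤ a ⬝ᵥ M⁻¹ *ᵥ a := by
  -- expand `0 ≤ (x - y) ⬝ᵥ M *ᵥ (x - y)` at the maximiser `y = M⁻¹ a`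
  set y := M⁻¹ *ᵥ a
  have hMy : M *ᵥ y = a := by
    rw [mulVec_mulVec, mul_nonsing_inv _ ((isUnit_iff_isUnit_det M).mp hM.isUnit), one_mulVec]
  have hsymm : y ⬝ᵥ M *ᵥ x = a ⬝ᵥ x := by
    rw [dotProduct_mulVec, ← mulVec_transpose, ← conjTranspose_eq_transpose_of_trivial,
      hM.isHermitian.eq, hMy]
  have := hM.posSemidef.dotProduct_mulVec_nonneg (x - y)
  simp only [star_trivial, mulVec_sub, dotProduct_sub, sub_dotProduct, hsymm, hMy] at this
  rw [dotProduct_comm x a, dotProduct_comm y a] at this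
  linarith

lemma dotProduct_inv_mulVec_le {M N : Matrix n n ℝ} (hM : M.PosDef) (hN : IsUnit N) {c : ℝ}
    (hc : 0 < c) (h : ∀ x, x ⬝ᵥ M *ᵥ x ≤ c * (x ⬝ᵥ N *ᵥ x)) (a : n → ℝ) :
    a ⬝ᵥ N⁻¹ *ᵥ a ≤ c * (a ⬝ᵥ M⁻¹ *ᵥ a) := by
  set y := N⁻¹ *ᵥ a
  have hNy : N *ᵥ y = a := by
    rw [mulVec_mulVec, mul_nonsing_inv _ ((isUnit_iff_isUnit_det N).mp hN), one_mulVec]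
  -- the variational bound for `M⁻¹` at `x = c⁻¹ N⁻¹ a`
  have hvar := hM.two_mul_dotProduct_sub_le_dotProduct_inv_mulVec a (c⁻¹ • y)
  have hy := h y
  rw [hNy, dotProduct_comm y a] at hy
  simp only [mulVec_smul, dotProduct_smul, smul_dotProduct, smul_eq_mul] at hvar
  have hquad : c⁻¹ * (c⁻¹ * (y ⬝ᵥ M *ᵥ y)) ≤ c⁻¹ * (a ⬝ᵥ y) :=
    calc c⁻¹ * (c⁻¹ * (y ⬝ᵥ M *ᵥ y)) ≤ c⁻¹ * (c⁻¹ * (c * (a ⬝ᵥ y))) := by gcongr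
      _ = c⁻¹ * (a ⬝ᵥ y) := by field_simp
  exact (inv_mul_le_iff₀ hc).mp (by linarith)

lemma approx_dotProduct_inv_mulVec {M N : Matrix n n ℝ} (hM : M.PosDef) (hN : N.PosDef) {c : ℝ}
    (hc : 0 < c) (h : ∀ x, Approx c (x ⬝ᵥ N *ᵥ x) (x ⬝ᵥ M *ᵥ x)) (a : n → ℝ) :
    Approx c (a ⬝ᵥ N⁻¹ *ᵥ a) (a ⬝ᵥ M⁻¹ *ᵥ a) := by
  simp only [Approx.iff_le_mul hc] at h ⊢
  exact ⟨hM.dotProduct_inv_mulVec_le hN.isUnit hc (fun x => (h x).2) a,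
    hN.dotProduct_inv_mulVec_le hM.isUnit hc (fun x => (h x).1) a⟩

end Matrix.PosDef

theorem stmt5 {n d : ℕ} (A : Matrix (Fin n) (Fin d) ℝ) (hA : A.rank = d)
    (p α : ℝ) (hp : 0 < p) (hα : 1 ≤ α) (v w : Fin n → ℝ)
    (hv : ∀ i, 0 < v i) (hw : ∀ i, 0 < w i)
    (happrox : ∀ i, (1 / α) * w i ≤ v i ∧ v i ≤ α * w i) :
    ∀ i,
      (1 / (α ^ |p / 2 - 1|)) *
          (A i ⬝ᵥ (Aᵀ * Matrix.diagonal (fun j => w j ^ (1 - 2 / p)) * A)⁻¹.mulVec (A i)) ^ (p / 2)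
        ≤ (A i ⬝ᵥ (Aᵀ * Matrix.diagonal (fun j => v j ^ (1 - 2 / p)) * A)⁻¹.mulVec (A i)) ^ (p / 2) ∧
      (A i ⬝ᵥ (Aᵀ * Matrix.diagonal (fun j => v j ^ (1 - 2 / p)) * A)⁻¹.mulVec (A i)) ^ (p / 2)
        ≤ (α ^ |p / 2 - 1|) *
          (A i ⬝ᵥ (Aᵀ * Matrix.diagonal (fun j => w j ^ (1 - 2 / p)) * A)⁻¹.mulVec (A i)) ^ (p / 2) := by
  intro i
  have hα₀ : 0 < α := by linarith
  have hAinj := mulVec_injective_of_rank_eq_card (hA.trans (Fintype.card_fin d).symm)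
  have hMv : (Aᵀ * diagonal (fun j => v j ^ (1 - 2 / p)) * A).PosDef :=
    posDef_transpose_mul_diagonal_mul hAinj fun j => Real.rpow_pos_of_pos (hv j) _
  have hMw : (Aᵀ * diagonal (fun j => w j ^ (1 - 2 / p)) * A).PosDef :=
    posDef_transpose_mul_diagonal_mul hAinj fun j => Real.rpow_pos_of_pos (hw j) _
  have hweights (j : Fin n) :
      Approx (α ^ |1 - 2 / p|) (w j ^ (1 - 2 / p)) (v j ^ (1 - 2 / p)) :=
    Approx.rpow hα₀ (hw j) (hv j) _ (happrox j)
  have hleverage := hMv.approx_dotProduct_inv_mulVec hMw (by positivity)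
    (approx_dotProduct_transpose_mul_diagonal_mul_mulVec A hweights) (A i)
  have hexp : |1 - 2 / p| * (p / 2) = |p / 2 - 1| := by
    rw [show p / 2 - 1 = (1 - 2 / p) * (p / 2) by field_simp, abs_mul, abs_of_pos (half_pos hp)]
  have hpower := hleverage.rpow_of_nonneg (by positivity)
    (hMw.dotProduct_inv_mulVec_nonneg _) (hMv.dotProduct_inv_mulVec_nonneg _) (half_pos hp).le
  rw [← Real.rpow_mul hα₀.le, hexp] at hpower
  exact hpower
end

section
/- Let p > 0 and let w̄ be the ℓ_p Lewis weights of an n×d matrix A of full column rank, normalized so that AᵀW̄^{1−2/p}A = I. Then AᵀA ≈_{n^{|1−2/p|}} I in the Loewner order. -/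
/-!
Write `c = 1 - 2/p` and let `a_i` be the rows of `A`. The normalization says that
`∑ w_i^c (a_i ⬝ x)² = |x|²` for every `x`, and the Lewis equations then say `|a_i|² = w_i^(1-c)`.
Hence `w_i ≤ 1`, and by Cauchy–Schwarz `t_i = w_i^c (a_i ⬝ x)² / |x|²` is a probability vector with
`t_i ≤ w_i`. Since `∑ (a_i ⬝ x)² = |x|² ∑ w_i^(-c) t_i`, it remains to bound `∑ w_i^(-c) t_i`:
comparing `w_i^(-c) t_i` with `t_i` on one side and with `t_i^(1-c)` on the other, the power-mean
inequality `∑ t_i^q ≶ n^(1-q)` for probability vectors gives the two bounds `n^(∓|c|)`.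
-/

open Matrix Finset

section PowerMean

variable {ι : Type*} [Fintype ι] {x : ι → ℝ}

lemma one_le_card_of_sum_eq_one (hsum : ∑ i, x i = 1) : (1 : ℝ) ≤ Fintype.card ι := by
  obtain ⟨i, -, -⟩ := exists_ne_zero_of_sum_ne_zero (hsum ▸ one_ne_zero : ∑ i, x i ≠ 0)
  exact Nat.one_le_cast.mpr (Fintype.card_pos_iff.mpr ⟨i⟩)

lemma sum_rpow_le_card_rpow_one_sub {q : ℝ} (hq0 : 0 ≤ q) (hq1 : q ≤ 1) (hx : ∀ i, 0 ≤ x i)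
    (hsum : ∑ i, x i = 1) : ∑ i, x i ^ q ≤ (Fintype.card ι : ℝ) ^ (1 - q) := by
  have hcard : (0 : ℝ) < Fintype.card ι := one_pos.trans_le (one_le_card_of_sum_eq_one hsum)
  have hjensen := (Real.concaveOn_rpow hq0 hq1).le_map_sum (t := univ)
    (w := fun _ => (Fintype.card ι : ℝ)⁻¹) (p := x) (fun _ _ => by positivity)
    (by simp [hcard.ne']) (fun i _ => hx i)
  simp only [smul_eq_mul, ← mul_sum, hsum, mul_one] at hjensen
  calc ∑ i, x i ^ q = Fintype.card ι * ((Fintype.card ι : ℝ)⁻¹ * ∑ i, x i ^ q) := by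
        field_simp
    _ ≤ Fintype.card ι * (Fintype.card ι : ℝ)⁻¹ ^ q := by gcongr
    _ = (Fintype.card ι : ℝ) ^ (1 - q) := by
        rw [Real.rpow_sub hcard, Real.rpow_one, Real.inv_rpow hcard.le, div_eq_mul_inv]

lemma card_rpow_one_sub_le_sum_rpow {q : ℝ} (hq : 1 ≤ q) (hx : ∀ i, 0 ≤ x i)
    (hsum : ∑ i, x i = 1) : (Fintype.card ι : ℝ) ^ (1 - q) ≤ ∑ i, x i ^ q := by
  have hcard : (0 : ℝ) < Fintype.card ι := one_pos.trans_le (one_le_card_of_sum_eq_one hsum)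
  have hholder := Real.rpow_sum_le_const_mul_sum_rpow_of_nonneg univ hq (fun i _ => hx i)
  rw [hsum, Real.one_rpow, card_univ] at hholder
  calc (Fintype.card ι : ℝ) ^ (1 - q) = (Fintype.card ι : ℝ) ^ (1 - q) * 1 := (mul_one _).symm
    _ ≤ (Fintype.card ι : ℝ) ^ (1 - q) * ((Fintype.card ι : ℝ) ^ (q - 1) * ∑ i, x i ^ q) := by
        gcongr
    _ = ∑ i, x i ^ q := by
        rw [← mul_assoc, ← Real.rpow_add hcard, sub_add_sub_cancel, sub_self, Real.rpow_zero,
          one_mul]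

end PowerMean

section WeightedPowers

variable {t w c : ℝ}

lemma le_rpow_neg_mul (hc : 0 ≤ c) (ht : 0 ≤ t) (htw : t ≤ w) (hw : w ≤ 1) :
    t ≤ w ^ (-c) * t := by
  rcases ht.eq_or_lt with rfl | ht
  · simp
  · exact le_mul_of_one_le_left ht.le
      (Real.one_le_rpow_of_pos_of_le_one_of_nonpos (ht.trans_le htw) hw (neg_nonpos.mpr hc))

lemma rpow_neg_mul_le_rpow_one_sub (hc : 0 ≤ c) (ht : 0 ≤ t) (htw : t ≤ w) :
    w ^ (-c) * t ≤ t ^ (1 - c) := by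
  rcases ht.eq_or_lt with rfl | ht
  · simpa using Real.rpow_nonneg le_rfl (1 - c)
  · calc w ^ (-c) * t ≤ t ^ (-c) * t :=
          mul_le_mul_of_nonneg_right (Real.rpow_le_rpow_of_nonpos ht htw (neg_nonpos.mpr hc)) ht.le
      _ = t ^ (1 - c) := by rw [sub_eq_neg_add, Real.rpow_add ht, Real.rpow_one]

lemma rpow_neg_mul_le_self (hc : c ≤ 0) (ht : 0 ≤ t) (htw : t ≤ w) (hw : w ≤ 1) :
    w ^ (-c) * t ≤ t :=
  mul_le_of_le_one_left ht (Real.rpow_le_one (ht.trans htw) hw (neg_nonneg.mpr hc))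

lemma rpow_one_sub_le_rpow_neg_mul (hc : c ≤ 0) (ht : 0 ≤ t) (htw : t ≤ w) :
    t ^ (1 - c) ≤ w ^ (-c) * t := by
  rcases ht.eq_or_lt with rfl | ht
  · simp [Real.zero_rpow (by linarith : (1 : ℝ) - c ≠ 0)]
  · calc t ^ (1 - c) = t ^ (-c) * t := by rw [sub_eq_neg_add, Real.rpow_add ht, Real.rpow_one]
      _ ≤ w ^ (-c) * t :=
          mul_le_mul_of_nonneg_right (Real.rpow_le_rpow ht.le htw (neg_nonneg.mpr hc)) ht.le

end WeightedPowers

theorem card_rpow_neg_abs_le_sum_rpow_neg_mul {ι : Type*} [Fintype ι] {t w : ι → ℝ} {c : ℝ}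
    (hc : c ≤ 1) (ht : ∀ i, 0 ≤ t i) (htw : ∀ i, t i ≤ w i) (hw : ∀ i, w i ≤ 1)
    (hsum : ∑ i, t i = 1) :
    (Fintype.card ι : ℝ) ^ (-|c|) ≤ ∑ i, w i ^ (-c) * t i ∧
      ∑ i, w i ^ (-c) * t i ≤ (Fintype.card ι : ℝ) ^ |c| := by
  have hcard := one_le_card_of_sum_eq_one hsum
  rcases le_total 0 c with hc0 | hc0
  · rw [abs_of_nonneg hc0]
    constructor
    · calc (Fintype.card ι : ℝ) ^ (-c) ≤ 1 := Real.rpow_le_one_of_one_le_of_nonpos hcard (by linarith)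
        _ = ∑ i, t i := hsum.symm
        _ ≤ ∑ i, w i ^ (-c) * t i := sum_le_sum fun i _ => le_rpow_neg_mul hc0 (ht i) (htw i) (hw i)
    · calc ∑ i, w i ^ (-c) * t i ≤ ∑ i, t i ^ (1 - c) :=
            sum_le_sum fun i _ => rpow_neg_mul_le_rpow_one_sub hc0 (ht i) (htw i)
        _ ≤ (Fintype.card ι : ℝ) ^ (1 - (1 - c)) :=
            sum_rpow_le_card_rpow_one_sub (by linarith) (by linarith) ht hsum
        _ = (Fintype.card ι : ℝ) ^ c := by rw [sub_sub_cancel]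
  · rw [abs_of_nonpos hc0, neg_neg]
    constructor
    · calc (Fintype.card ι : ℝ) ^ c = (Fintype.card ι : ℝ) ^ (1 - (1 - c)) := by rw [sub_sub_cancel]
        _ ≤ ∑ i, t i ^ (1 - c) := card_rpow_one_sub_le_sum_rpow (by linarith) ht hsum
        _ ≤ ∑ i, w i ^ (-c) * t i :=
            sum_le_sum fun i _ => rpow_one_sub_le_rpow_neg_mul hc0 (ht i) (htw i)
    · calc ∑ i, w i ^ (-c) * t i ≤ ∑ i, t i :=
            sum_le_sum fun i _ => rpow_neg_mul_le_self hc0 (ht i) (htw i) (hw i)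
        _ = 1 := hsum
        _ ≤ (Fintype.card ι : ℝ) ^ (-c) := Real.one_le_rpow hcard (by linarith)

section QuadraticForms

variable {m k : Type*} [Fintype m] [Fintype k]

lemma sq_dotProduct_le_dotProduct_self_mul (u v : k → ℝ) : (u ⬝ᵥ v) ^ 2 ≤ (u ⬝ᵥ u) * (v ⬝ᵥ v) := by
  simpa only [dotProduct, sq] using sum_mul_sq_le_sq_mul_sq univ u v

lemma dotProduct_mulVec_transpose_mul_diagonal_mul [DecidableEq m] (B : Matrix m k ℝ)
    (f : m → ℝ) (x : k → ℝ) :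
    x ⬝ᵥ (Bᵀ * diagonal f * B) *ᵥ x = ∑ i, f i * (B i ⬝ᵥ x) ^ 2 := by
  rw [← mulVec_mulVec, ← mulVec_mulVec, dotProduct_mulVec, vecMul_transpose]
  rw [dotProduct]
  simp only [mulVec_diagonal]
  exact sum_congr rfl fun i _ => by change _ = f i * (B *ᵥ x) i ^ 2; ring

lemma dotProduct_mulVec_transpose_mul_self (B : Matrix m k ℝ) (x : k → ℝ) :
    x ⬝ᵥ (Bᵀ * B) *ᵥ x = ∑ i, (B i ⬝ᵥ x) ^ 2 := by
  classical
  simpa using dotProduct_mulVec_transpose_mul_diagonal_mul B 1 x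

lemma sum_mul_sq_dotProduct_eq_dotProduct_self [DecidableEq m] [DecidableEq k] {B : Matrix m k ℝ} {v : m → ℝ}
    (hB : Bᵀ * diagonal v * B = 1) (x : k → ℝ) : ∑ i, v i * (B i ⬝ᵥ x) ^ 2 = x ⬝ᵥ x := by
  rw [← dotProduct_mulVec_transpose_mul_diagonal_mul, hB, one_mulVec]

lemma dotProduct_smul_one_mulVec [DecidableEq k] (α : ℝ) (x : k → ℝ) :
    x ⬝ᵥ (α • (1 : Matrix k k ℝ)) *ᵥ x = α * (x ⬝ᵥ x) := by
  rw [smul_mulVec, one_mulVec, dotProduct_smul, smul_eq_mul]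

lemma posSemidef_sub_of_dotProduct_mulVec_le {M N : Matrix k k ℝ} (hM : M.IsHermitian)
    (hN : N.IsHermitian) (h : ∀ x, x ⬝ᵥ N *ᵥ x ≤ x ⬝ᵥ M *ᵥ x) : (M - N).PosSemidef :=
  posSemidef_iff_dotProduct_mulVec.mpr ⟨hM.sub hN, fun x => by
    simpa only [star_trivial, sub_mulVec, dotProduct_sub, sub_nonneg] using h x⟩

end QuadraticForms

section LewisWeights

variable {m k : Type*} [Fintype m] [Fintype k] [DecidableEq m] [DecidableEq k]
  {A : Matrix m k ℝ} {w : m → ℝ} {c : ℝ}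

lemma lewis_weight_le_one (hw : ∀ i, 0 < w i) (hrow : ∀ i, A i ⬝ᵥ A i = w i ^ (1 - c))
    (hnorm : Aᵀ * diagonal (fun i => w i ^ c) * A = 1) (i : m) : w i ≤ 1 := by
  have hwc : w i ^ c * w i ^ (1 - c) = w i := by
    rw [← Real.rpow_add (hw i), add_sub_cancel, Real.rpow_one]
  have hterm : w i ^ c * (A i ⬝ᵥ A i) ^ 2 ≤ ∑ j, w j ^ c * (A j ⬝ᵥ A i) ^ 2 :=
    single_le_sum (f := fun j => w j ^ c * (A j ⬝ᵥ A i) ^ 2)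
      (fun j _ => mul_nonneg (Real.rpow_nonneg (hw j).le _) (sq_nonneg _)) (mem_univ i)
  rw [sum_mul_sq_dotProduct_eq_dotProduct_self hnorm, hrow, sq, ← mul_assoc, hwc] at hterm
  exact le_of_mul_le_mul_right (by rwa [one_mul]) (Real.rpow_pos_of_pos (hw i) _)

theorem card_rpow_neg_abs_mul_le_sum_sq_dotProduct (hc : c ≤ 1) (hw : ∀ i, 0 < w i)
    (hrow : ∀ i, A i ⬝ᵥ A i = w i ^ (1 - c))
    (hnorm : Aᵀ * diagonal (fun i => w i ^ c) * A = 1) (x : k → ℝ) :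
    (Fintype.card m : ℝ) ^ (-|c|) * (x ⬝ᵥ x) ≤ ∑ i, (A i ⬝ᵥ x) ^ 2 ∧
      ∑ i, (A i ⬝ᵥ x) ^ 2 ≤ (Fintype.card m : ℝ) ^ |c| * (x ⬝ᵥ x) := by
  rcases eq_or_ne x 0 with rfl | hx
  · simp
  have hS : 0 < x ⬝ᵥ x := by simpa using dotProduct_self_star_pos_iff.mpr hx
  set t : m → ℝ := fun i => w i ^ c * (A i ⬝ᵥ x) ^ 2 / (x ⬝ᵥ x) with ht
  have hsq : ∀ i, (A i ⬝ᵥ x) ^ 2 = (x ⬝ᵥ x) * (w i ^ (-c) * t i) := fun i => by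
    have : w i ^ c ≠ 0 := (Real.rpow_pos_of_pos (hw i) c).ne'
    rw [ht, Real.rpow_neg (hw i).le]
    field_simp
  have hsum : ∑ i, t i = 1 := by
    rw [ht, ← sum_div, sum_mul_sq_dotProduct_eq_dotProduct_self hnorm, div_self hS.ne']
  have htw : ∀ i, t i ≤ w i := fun i => by
    rw [ht, div_le_iff₀ hS]
    calc w i ^ c * (A i ⬝ᵥ x) ^ 2 ≤ w i ^ c * (w i ^ (1 - c) * (x ⬝ᵥ x)) := by
          refine mul_le_mul_of_nonneg_left ?_ (Real.rpow_nonneg (hw i).le c)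
          simpa only [hrow i] using sq_dotProduct_le_dotProduct_self_mul (A i) x
      _ = w i * (x ⬝ᵥ x) := by
          rw [← mul_assoc, ← Real.rpow_add (hw i), add_sub_cancel, Real.rpow_one]
  obtain ⟨hlo, hhi⟩ := card_rpow_neg_abs_le_sum_rpow_neg_mul hc
    (fun i => by positivity [(hw i).le]) htw (lewis_weight_le_one hw hrow hnorm) hsum
  simp only [hsq, ← mul_sum]
  constructor
  · rw [mul_comm]; gcongr
  · rw [mul_comm _ (x ⬝ᵥ x)]; gcongr

end LewisWeights

theorem stmt8_general {n d : ℕ} (A : Matrix (Fin n) (Fin d) ℝ)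
    (p : ℝ) (hp : 0 < p) (w : Fin n → ℝ) (hw : ∀ i, 0 < w i)
    (hlewis : ∀ i,
      A i ⬝ᵥ (Aᵀ * Matrix.diagonal (fun j => w j ^ (1 - 2 / p)) * A)⁻¹.mulVec (A i)
        = w i ^ (2 / p))
    (hnorm : Aᵀ * Matrix.diagonal (fun j => w j ^ (1 - 2 / p)) * A = 1) :
    (Aᵀ * A - (1 / (n : ℝ) ^ |1 - 2 / p|) • (1 : Matrix (Fin d) (Fin d) ℝ)).PosSemidef ∧
      (((n : ℝ) ^ |1 - 2 / p|) • (1 : Matrix (Fin d) (Fin d) ℝ) - Aᵀ * A).PosSemidef := by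
  have hrow : ∀ i, A i ⬝ᵥ A i = w i ^ (1 - (1 - 2 / p)) := fun i => by
    simpa [hnorm] using hlewis i
  have hbounds := card_rpow_neg_abs_mul_le_sum_sq_dotProduct
    (by linarith [div_pos two_pos hp]) hw hrow hnorm
  simp only [Fintype.card_fin] at hbounds
  have hAtA : (Aᵀ * A).IsHermitian := by simpa using isHermitian_conjTranspose_mul_self A
  have hI : ∀ α : ℝ, (α • (1 : Matrix (Fin d) (Fin d) ℝ)).IsHermitian := fun α => by
    simp [IsHermitian]
  constructor
  · refine posSemidef_sub_of_dotProduct_mulVec_le hAtA (hI _) fun x => ?_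
    rw [dotProduct_smul_one_mulVec, dotProduct_mulVec_transpose_mul_self, one_div,
      ← Real.rpow_neg (Nat.cast_nonneg n)]
    exact (hbounds x).1
  · refine posSemidef_sub_of_dotProduct_mulVec_le (hI _) hAtA fun x => ?_
    rw [dotProduct_smul_one_mulVec, dotProduct_mulVec_transpose_mul_self]
    exact (hbounds x).2

theorem stmt8 {n d : ℕ} (A : Matrix (Fin n) (Fin d) ℝ) (hA : A.rank = d)
    (p : ℝ) (hp : 0 < p) (w : Fin n → ℝ) (hw : ∀ i, 0 < w i)
    (hlewis : ∀ i,
      A i ⬝ᵥ (Aᵀ * Matrix.diagonal (fun j => w j ^ (1 - 2 / p)) * A)⁻¹.mulVec (A i)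
        = w i ^ (2 / p))
    (hnorm : Aᵀ * Matrix.diagonal (fun j => w j ^ (1 - 2 / p)) * A = 1) :
    (Aᵀ * A - (1 / (n : ℝ) ^ |1 - 2 / p|) • (1 : Matrix (Fin d) (Fin d) ℝ)).PosSemidef ∧
      (((n : ℝ) ^ |1 - 2 / p|) • (1 : Matrix (Fin d) (Fin d) ℝ) - Aᵀ * A).PosSemidef :=
  stmt8_general A p hp w hw hlewis hnorm
end

section
/- For 0 < p < 4, ℓ_p Lewis weights are c-stable with c = (p/2)/(1 − |p/2 − 1|): any α-almost Lewis weights w of A satisfy w_i ≈_{α^c} w̄_i for all i, where w̄ are the true Lewis weights. -/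
/-!
Let `ρ` be the smallest constant with `w ≤ ρ w̄` and `w̄ ≤ ρ w` coordinatewise. Then the
weights `w^(1-2/p)` and `w̄^(1-2/p)` are within a factor `ρ^|1-2/p|` of each other, hence so
are the leverages `a_iᵀ (AᵀWA)⁻¹ a_i`. At an index where the ratio `ρ` is attained, comparing
the almost-Lewis condition for `w` with the exact one for `w̄` gives
`ρ^(2/p) ≤ α ρ^|1-2/p|`. Since `|1-2/p| < 2/p` exactly when `0 < p < 4`, this bounds `ρ` by
`α^c` with `c = (2/p - |1-2/p|)⁻¹ = (p/2)/(1 - |p/2-1|)`.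
-/

open Matrix

namespace Real

theorem rpow_le_rpow_abs_mul_rpow {u v ρ : ℝ} (hu : 0 < u) (hv : 0 < v)
    (huv : u ≤ ρ * v) (hvu : v ≤ ρ * u) (t : ℝ) : u ^ t ≤ ρ ^ |t| * v ^ t := by
  have hρ : 0 < ρ := pos_of_mul_pos_left (hu.trans_le huv) hv.le
  rcases le_or_gt 0 t with ht | ht
  · calc u ^ t ≤ (ρ * v) ^ t := rpow_le_rpow hu.le huv ht
      _ = ρ ^ |t| * v ^ t := by rw [mul_rpow hρ.le hv.le, abs_of_nonneg ht]
  · have hvu' : ρ⁻¹ * v ≤ u := by rwa [inv_mul_le_iff₀ hρ]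
    calc u ^ t ≤ (ρ⁻¹ * v) ^ t := rpow_le_rpow_of_nonpos (by positivity) hvu' ht.le
      _ = ρ ^ |t| * v ^ t := by
        rw [mul_rpow (by positivity) hv.le, inv_rpow hρ.le, ← rpow_neg hρ.le, abs_of_neg ht]

theorem le_rpow_inv_sub_of_rpow_le {ρ α s τ : ℝ} (hρ : 0 < ρ) (hτs : τ < s)
    (h : ρ ^ s ≤ α * ρ ^ τ) : ρ ≤ α ^ (s - τ)⁻¹ := by
  have hs : ρ ^ (s - τ) ≤ α := by
    rwa [rpow_sub hρ, div_le_iff₀ (rpow_pos_of_pos hρ τ)]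
  calc ρ = (ρ ^ (s - τ)) ^ (s - τ)⁻¹ := by
        rw [← rpow_mul hρ.le, mul_inv_cancel₀ (sub_pos.mpr hτs).ne', rpow_one]
    _ ≤ α ^ (s - τ)⁻¹ := rpow_le_rpow (by positivity) hs (inv_nonneg.mpr (sub_pos.mpr hτs).le)

end Real

theorem abs_one_sub_two_div_lt {p : ℝ} (hp : 0 < p) (hp4 : p < 4) : |1 - 2 / p| < 2 / p := by
  have h : 1 < 4 / p := by rwa [lt_div_iff₀ hp, one_mul]
  rw [abs_lt]
  constructor <;> linarith [show 4 / p = 2 / p + 2 / p by ring]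

theorem div_two_div_one_sub_abs_eq {p : ℝ} (hp : 0 < p) :
    p / 2 / (1 - |p / 2 - 1|) = (2 / p - |1 - 2 / p|)⁻¹ := by
  have habs : |1 - 2 / p| = 2 / p * |p / 2 - 1| := by
    rw [← abs_of_pos (div_pos two_pos hp), ← abs_mul, abs_of_pos (div_pos two_pos hp)]
    congr 1
    field_simp
  rw [habs, ← mul_one_sub, mul_inv, inv_div, div_eq_mul_inv]

theorem exists_ratio_bound_attained {ι : Type*} [Fintype ι] [Nonempty ι] {u v : ι → ℝ}
    (hu : ∀ j, 0 < u j) (hv : ∀ j, 0 < v j) :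
    ∃ ρ > 0, ∃ i, (∀ j, u j ≤ ρ * v j) ∧ (∀ j, v j ≤ ρ * u j) ∧
      (u i = ρ * v i ∨ v i = ρ * u i) := by
  obtain ⟨i, -, hi⟩ := Finset.exists_max_image Finset.univ
    (fun j => max (u j / v j) (v j / u j)) Finset.univ_nonempty
  have hmax (j : ι) : max (u j / v j) (v j / u j) ≤ max (u i / v i) (v i / u i) :=
    hi j (Finset.mem_univ j)
  refine ⟨max (u i / v i) (v i / u i), lt_max_of_lt_left (div_pos (hu i) (hv i)), i, fun j => ?_, fun j => ?_, ?_⟩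
  · exact (div_le_iff₀ (hv j)).mp ((le_max_left _ _).trans (hmax j))
  · exact (div_le_iff₀ (hu j)).mp ((le_max_right _ _).trans (hmax j))
  · rcases max_choice (u i / v i) (v i / u i) with h | h <;> rw [h]
    · exact .inl (div_mul_cancel₀ _ (hv i).ne').symm
    · exact .inr (div_mul_cancel₀ _ (hu i).ne').symm

namespace Matrix

variable {m k : Type*} [Fintype k]

theorem mulVec_injective_of_rank_eq_card_s11 {A : Matrix m k ℝ} (hA : A.rank = Fintype.card k) :
    Function.Injective A.mulVec :=
  mulVec_injective_iff.mpr <| linearIndependent_iff_card_eq_finrank_span.mpr <| by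
    rw [← hA, rank_eq_finrank_span_cols]
    rfl

variable [Fintype m] [DecidableEq m]

theorem posSemidef_transpose_mul_diagonal_mul (A : Matrix m k ℝ) {D : m → ℝ}
    (hD : ∀ j, 0 ≤ D j) : (Aᵀ * diagonal D * A).PosSemidef := by
  simpa using (posSemidef_diagonal_iff.mpr hD).conjTranspose_mul_mul_same A

theorem posDef_transpose_mul_diagonal_mul_s11 {A : Matrix m k ℝ} (hA : Function.Injective A.mulVec)
    {D : m → ℝ} (hD : ∀ j, 0 < D j) : (Aᵀ * diagonal D * A).PosDef := by
  simpa using (posDef_diagonal_iff.mpr hD).conjTranspose_mul_mul_same hA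

variable [DecidableEq k]

theorem PosDef.dotProduct_inv_mulVec_le_s11 {M N : Matrix k k ℝ} (hM : M.PosDef)
    (hMN : (N - M).PosSemidef) (v : k → ℝ) : v ⬝ᵥ N⁻¹ *ᵥ v ≤ v ⬝ᵥ M⁻¹ *ᵥ v := by
  have hN : N.PosDef := by simpa using hM.add_posSemidef hMN
  set x := N⁻¹ *ᵥ v
  set y := M⁻¹ *ᵥ v
  have hNx : N *ᵥ x = v := by
    rw [mulVec_mulVec, mul_nonsing_inv _ ((isUnit_iff_isUnit_det N).mp hN.isUnit), one_mulVec]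
  have hMy : M *ᵥ y = v := by
    rw [mulVec_mulVec, mul_nonsing_inv _ ((isUnit_iff_isUnit_det M).mp hM.isUnit), one_mulVec]
  have hMyx : y ⬝ᵥ M *ᵥ x = x ⬝ᵥ v := by
    rw [dotProduct_mulVec, ← hM.isHermitian.eq, conjTranspose_eq_transpose_of_trivial,
      vecMul_transpose, hMy, dotProduct_comm]
  -- `0 ≤ (x - y)ᵀ M (x - y)` together with `xᵀ M x ≤ xᵀ N x = xᵀ v`
  have hxy := hM.posSemidef.dotProduct_mulVec_nonneg (x - y)
  have hx := hMN.dotProduct_mulVec_nonneg x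
  simp only [star_trivial, mulVec_sub, sub_mulVec, dotProduct_sub, sub_dotProduct, hNx, hMy,
    hMyx] at hxy hx
  linarith [dotProduct_comm x v, dotProduct_comm y v]

noncomputable def weightedLeverage (A : Matrix m k ℝ) (D : m → ℝ) (i : m) : ℝ :=
  A i ⬝ᵥ (Aᵀ * diagonal D * A)⁻¹ *ᵥ A i

theorem weightedLeverage_smul {A : Matrix m k ℝ} (hA : Function.Injective A.mulVec)
    {D : m → ℝ} (hD : ∀ j, 0 < D j) {c : ℝ} (hc : c ≠ 0) (i : m) :
    weightedLeverage A (c • D) i = c⁻¹ * weightedLeverage A D i := by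
  have hdet := (isUnit_iff_isUnit_det _).mp (posDef_transpose_mul_diagonal_mul_s11 hA hD).isUnit
  have hinv : (c • (Aᵀ * diagonal D * A))⁻¹ = c⁻¹ • (Aᵀ * diagonal D * A)⁻¹ := by
    simpa [Units.smul_def] using Matrix.inv_smul' _ (Units.mk0 c hc) hdet
  rw [weightedLeverage, weightedLeverage, diagonal_smul, Matrix.mul_smul, Matrix.smul_mul, hinv,
    smul_mulVec, dotProduct_smul, smul_eq_mul]

theorem weightedLeverage_antitone {A : Matrix m k ℝ} (hA : Function.Injective A.mulVec)
    {D D' : m → ℝ} (hD : ∀ j, 0 < D j) (h : ∀ j, D j ≤ D' j) (i : m) :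
    weightedLeverage A D' i ≤ weightedLeverage A D i := by
  refine (posDef_transpose_mul_diagonal_mul_s11 hA hD).dotProduct_inv_mulVec_le_s11 ?_ (A i)
  have := posSemidef_transpose_mul_diagonal_mul A (D := fun j => D' j - D j)
    fun j => sub_nonneg.mpr (h j)
  rwa [← diagonal_sub, Matrix.mul_sub, Matrix.sub_mul] at this

theorem weightedLeverage_le_mul {A : Matrix m k ℝ} (hA : Function.Injective A.mulVec)
    {D D' : m → ℝ} (hD : ∀ j, 0 < D j) {c : ℝ} (hc : 0 < c) (h : ∀ j, D j ≤ c * D' j)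
    (i : m) : weightedLeverage A D' i ≤ c * weightedLeverage A D i := by
  have hD' (j : m) : 0 < D' j := pos_of_mul_pos_right ((hD j).trans_le (h j)) hc.le
  have := weightedLeverage_antitone hA hD (D' := c • D') h i
  rwa [weightedLeverage_smul hA hD' hc.ne', inv_mul_le_iff₀ hc] at this

theorem rpow_le_mul_mul_rpow_abs_of_weightedLeverage {A : Matrix m k ℝ}
    (hA : Function.Injective A.mulVec) {u v : m → ℝ} (hu : ∀ j, 0 < u j) (hv : ∀ j, 0 < v j)
    {ρ s t α β : ℝ} (hα : 0 ≤ α) (huv : ∀ j, u j ≤ ρ * v j) (hvu : ∀ j, v j ≤ ρ * u j)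
    {i : m} (hi : u i = ρ * v i) (hui : u i ^ s ≤ α * weightedLeverage A (fun j => u j ^ t) i)
    (hvi : weightedLeverage A (fun j => v j ^ t) i ≤ β * v i ^ s) :
    ρ ^ s ≤ α * β * ρ ^ |t| := by
  have hρ : 0 < ρ := pos_of_mul_pos_left (hi ▸ hu i) (hv i).le
  have hlev : weightedLeverage A (fun j => u j ^ t) i
      ≤ ρ ^ |t| * weightedLeverage A (fun j => v j ^ t) i :=
    weightedLeverage_le_mul hA (fun j => Real.rpow_pos_of_pos (hv j) t) (by positivity)
      (fun j => Real.rpow_le_rpow_abs_mul_rpow (hv j) (hu j) (hvu j) (huv j) t) i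
  have hvs : 0 < v i ^ s := Real.rpow_pos_of_pos (hv i) s
  refine le_of_mul_le_mul_right ?_ hvs
  calc ρ ^ s * v i ^ s = u i ^ s := by rw [hi, Real.mul_rpow hρ.le (hv i).le]
    _ ≤ α * (ρ ^ |t| * (β * v i ^ s)) :=
      hui.trans (mul_le_mul_of_nonneg_left (hlev.trans (by gcongr)) hα)
    _ = α * β * ρ ^ |t| * v i ^ s := by ring

end Matrix

theorem stmt11 {n d : ℕ} (A : Matrix (Fin n) (Fin d) ℝ) (hA : A.rank = d)
    (p α : ℝ) (hp : 0 < p) (hp4 : p < 4) (hα : 1 ≤ α)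
    (wbar w : Fin n → ℝ) (hwbar : ∀ i, 0 < wbar i) (hw : ∀ i, 0 < w i)
    (hlewis : ∀ i,
      A i ⬝ᵥ (Aᵀ * Matrix.diagonal (fun j => wbar j ^ (1 - 2 / p)) * A)⁻¹.mulVec (A i)
        = wbar i ^ (2 / p))
    (halmost : ∀ i,
      (1 / α) * w i ^ (2 / p)
          ≤ A i ⬝ᵥ (Aᵀ * Matrix.diagonal (fun j => w j ^ (1 - 2 / p)) * A)⁻¹.mulVec (A i) ∧
        A i ⬝ᵥ (Aᵀ * Matrix.diagonal (fun j => w j ^ (1 - 2 / p)) * A)⁻¹.mulVec (A i)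
          ≤ α * w i ^ (2 / p)) :
    ∀ i,
      (1 / α ^ ((p / 2) / (1 - |p / 2 - 1|))) * wbar i ≤ w i ∧
        w i ≤ α ^ ((p / 2) / (1 - |p / 2 - 1|)) * wbar i := by
  intro i
  have hα0 : 0 < α := one_pos.trans_le hα
  have hinj := mulVec_injective_of_rank_eq_card_s11 (A := A) (by simpa using hA)
  have : Nonempty (Fin n) := ⟨i⟩
  obtain ⟨ρ, hρ, i₀, hwρ, hwbarρ, hi₀⟩ := exists_ratio_bound_attained hw hwbar
  have hkey : ρ ^ (2 / p) ≤ α * ρ ^ |1 - 2 / p| := by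
    rcases hi₀ with h | h
    · have hup : w i₀ ^ (2 / p) ≤ α * weightedLeverage A (fun j => w j ^ (1 - 2 / p)) i₀ := by
        rw [← inv_mul_le_iff₀ hα0, ← one_div]
        exact (halmost i₀).1
      simpa using rpow_le_mul_mul_rpow_abs_of_weightedLeverage hinj hw hwbar hα0.le hwρ hwbarρ h
        hup (β := 1) (by rw [one_mul]; exact (hlewis i₀).le)
    · simpa using rpow_le_mul_mul_rpow_abs_of_weightedLeverage hinj hwbar hw zero_le_one
        hwbarρ hwρ h (α := 1) (by rw [one_mul]; exact (hlewis i₀).ge) (halmost i₀).2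
  have hρc : ρ ≤ α ^ ((p / 2) / (1 - |p / 2 - 1|)) := by
    rw [div_two_div_one_sub_abs_eq hp]
    exact Real.le_rpow_inv_sub_of_rpow_le hρ (abs_one_sub_two_div_lt hp hp4) hkey
  refine ⟨?_, (hwρ i).trans (mul_le_mul_of_nonneg_right hρc (hwbar i).le)⟩
  rw [one_div, inv_mul_le_iff₀ (Real.rpow_pos_of_pos hα0 _)]
  exact (hwbarρ i).trans (mul_le_mul_of_nonneg_right hρc (hw i).le)
end

section
/- Let A have ℓ_1 Lewis weights each bounded by U, and let σ_i be independent Rademacher variables. Then for any l ≥ 1, E_σ[(max_{‖Ax‖₁=1} |Σ_i σ_i |a_iᵀx||)^l] ≤ 2n(C·l·U)^{l/2} for an absolute constant C. -/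
/-!
Replacing the outer absolute value by a positive part costs a factor `2` (the signs `σ` and `-σ`
cover both cases). The inner absolute values `|aᵢᵀx|` are then removed by the contraction
principle: flipping one sign `σₐ` at a time, `sup (u + |v|)` and `sup (u - |v|)` are bounded by
the maximum and the minimum of `sup (u + v)` and `sup (u - v)`, which is enough for any monotone
function of the suprema.

Without inner absolute values, `∑ᵢ σᵢ (Ax)ᵢ = (σᵀΠ)(Ax)` since `ΠA = A`, so under `‖Ax‖₁ = 1` the
supremum is at most `maxⱼ |(σᵀΠ)ⱼ|`, and its `l`-th power at most `∑ⱼ |∑ᵢ σᵢ Πᵢⱼ|^l`. With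
`P = A (AᵀW⁻¹A)⁻¹ Aᵀ` we have `P W⁻¹ P = P` and `Pⱼⱼ = wⱼ²`, so `∑ᵢ Pᵢⱼ² ≤ U ∑ᵢ Pᵢⱼ²/wᵢ = U wⱼ²`:
every column of `Π = P W⁻¹` has squared norm at most `U`. Khintchine's inequality, from the
even-moment bound `E (∑ σᵢbᵢ)^{2k} ≤ (2k-1)!! (∑ bᵢ²)^k` and Jensen's inequality, finishes the
proof with `C = 2`.
-/

open Matrix Finset
open scoped Nat

noncomputable def boolSign (b : Bool) : ℝ := if b then 1 else -1

@[simp] lemma boolSign_true : boolSign true = 1 := rfl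

@[simp] lemma boolSign_false : boolSign false = -1 := rfl

@[simp] lemma boolSign_not (b : Bool) : boolSign (!b) = -boolSign b := by cases b <;> simp

lemma boolSign_mul_le_abs (b : Bool) (t : ℝ) : boolSign b * t ≤ |t| := by
  cases b <;> simp [le_abs_self, neg_le_abs]

section SignFlip

variable {ι : Type*} [DecidableEq ι]

def flipAt (a : ι) : Equiv.Perm (ι → Bool) :=
  Function.Involutive.toPerm (fun σ => Function.update σ a (!σ a)) fun σ => by
    ext i
    by_cases h : i = a <;> simp [h]

lemma flipAt_apply (a : ι) (σ : ι → Bool) : flipAt a σ = Function.update σ a (!σ a) := rfl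

@[simp] lemma flipAt_apply_self (a : ι) (σ : ι → Bool) : flipAt a σ a = !σ a := by
  simp [flipAt_apply]

lemma flipAt_apply_of_ne {a i : ι} (h : i ≠ a) (σ : ι → Bool) : flipAt a σ i = σ i := by
  simp [flipAt_apply, h]

lemma two_mul_sum_eq_sum_add_flipAt [Fintype ι] (a : ι) (g : (ι → Bool) → ℝ) :
    2 * ∑ σ, g σ = ∑ σ, (g σ + g (flipAt a σ)) := by
  rw [sum_add_distrib, Equiv.sum_comp]
  ring

end SignFlip

lemma sum_boolSign_mul_le {ι : Type*} [Fintype ι] (σ : ι → Bool) (t : ι → ℝ) :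
    ∑ i, boolSign (σ i) * t i ≤ ∑ i, |t i| :=
  sum_le_sum fun _ _ => boolSign_mul_le_abs _ _

lemma sum_range_two_mul_add_one_of_odd {M : Type*} [AddCommMonoid M] {f : ℕ → M}
    (hf : ∀ j, Odd j → f j = 0) (k : ℕ) :
    ∑ j ∈ range (2 * k + 1), f j = ∑ m ∈ range (k + 1), f (2 * m) := by
  induction k with
  | zero => simp
  | succ k ih =>
    rw [show 2 * (k + 1) + 1 = 2 * k + 1 + 1 + 1 by ring, sum_range_succ, sum_range_succ, ih,
      hf _ (odd_two_mul_add_one k), add_zero, sum_range_succ (fun m => f (2 * m)) (k + 1)]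
    rfl

namespace Nat

lemma factorial_two_mul_eq (k : ℕ) : (2 * k)! = 2 ^ k * k ! * (2 * k - 1)‼ := by
  cases k with
  | zero => rfl
  | succ k =>
    rw [show 2 * (k + 1) = 2 * k + 1 + 1 by ring, factorial_eq_mul_doubleFactorial,
      show 2 * k + 1 + 1 = 2 * (k + 1) by ring, doubleFactorial_two_mul,
      show 2 * (k + 1) - 1 = 2 * k + 1 by omega]

lemma doubleFactorial_two_mul_sub_one_le (k : ℕ) : (2 * k - 1)‼ ≤ k ^ k := by
  have h : 2 ^ k * k ! * (2 * k - 1)‼ ≤ 2 ^ k * k ! * k ^ k := by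
    rw [← factorial_two_mul_eq]
    calc (2 * k)! ≤ (2 * k) ^ k * k ! := factorial_two_mul_le k
      _ = 2 ^ k * k ! * k ^ k := by ring
  exact Nat.le_of_mul_le_mul_left h (by positivity)

lemma choose_two_mul_mul_doubleFactorial_le {k m : ℕ} (hm : m ≤ k) :
    (2 * k).choose (2 * m) * (2 * m - 1)‼ ≤ k.choose m * (2 * k - 1)‼ := by
  refine Nat.le_of_mul_le_mul_right (c := 2 ^ k * m ! * (k - m)!) ?_ (by positivity)
  have hpow : 2 ^ k = 2 ^ m * 2 ^ (k - m) := by rw [← pow_add, Nat.add_sub_cancel' hm]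
  calc (2 * k).choose (2 * m) * (2 * m - 1)‼ * (2 ^ k * m ! * (k - m)!)
      = (2 * k).choose (2 * m) * (2 * m)! * (2 ^ (k - m) * (k - m)!) := by
        rw [factorial_two_mul_eq, hpow]; ring
    _ ≤ (2 * k).choose (2 * m) * (2 * m)! * (2 * k - 2 * m)! := by
        rw [show 2 * k - 2 * m = 2 * (k - m) by omega]
        exact Nat.mul_le_mul_left _ (two_pow_mul_factorial_le_factorial_two_mul _)
    _ = k.choose m * m ! * (k - m)! * (2 ^ k * (2 * k - 1)‼) := by
        rw [choose_mul_factorial_mul_factorial (by omega), choose_mul_factorial_mul_factorial hm,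
          factorial_two_mul_eq]; ring
    _ = k.choose m * (2 * k - 1)‼ * (2 ^ k * m ! * (k - m)!) := by ring

end Nat

section Khintchine

variable {ι : Type*} [Fintype ι] [DecidableEq ι]

lemma sum_pow_mul_boolSign_pow {s : Finset ι} {a : ι} (ha : a ∉ s) (b : ι → ℝ) (j m : ℕ) :
    ∑ σ : ι → Bool, (∑ i ∈ s, boolSign (σ i) * b i) ^ j * boolSign (σ a) ^ m =
      if Even m then ∑ σ : ι → Bool, (∑ i ∈ s, boolSign (σ i) * b i) ^ j else 0 := by
  split_ifs with hm
  · refine sum_congr rfl fun σ _ => ?_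
    cases σ a <;> simp [hm.neg_one_pow]
  · have hflip := Equiv.sum_comp (flipAt a)
      fun σ => (∑ i ∈ s, boolSign (σ i) * b i) ^ j * boolSign (σ a) ^ m
    have hs : ∀ σ, ∑ i ∈ s, boolSign (flipAt a σ i) * b i = ∑ i ∈ s, boolSign (σ i) * b i :=
      fun σ => sum_congr rfl fun i hi => by rw [flipAt_apply_of_ne (ne_of_mem_of_not_mem hi ha)]
    simp only [hs, flipAt_apply_self, boolSign_not, (Nat.not_even_iff_odd.1 hm).neg_pow, mul_neg,
      sum_neg_distrib] at hflip
    linarith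

lemma sum_sum_cons_boolSign_mul_pow_two_mul {s : Finset ι} {a : ι} (ha : a ∉ s) (b : ι → ℝ)
    (k : ℕ) :
    ∑ σ : ι → Bool, (∑ i ∈ cons a s ha, boolSign (σ i) * b i) ^ (2 * k) =
      ∑ m ∈ range (k + 1), ((2 * k).choose (2 * m) * (b a ^ 2) ^ (k - m)) *
        ∑ σ : ι → Bool, (∑ i ∈ s, boolSign (σ i) * b i) ^ (2 * m) := by
  calc _ = ∑ j ∈ range (2 * k + 1), ((2 * k).choose j * b a ^ (2 * k - j)) *
        ∑ σ : ι → Bool, (∑ i ∈ s, boolSign (σ i) * b i) ^ j * boolSign (σ a) ^ (2 * k - j) := by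
        simp only [sum_cons, add_comm (boolSign _ * b a), add_pow, mul_pow, mul_sum]
        rw [sum_comm]
        exact sum_congr rfl fun j _ => sum_congr rfl fun σ _ => by ring
    _ = _ := by
        simp only [sum_pow_mul_boolSign_pow ha]
        rw [sum_range_two_mul_add_one_of_odd]
        · refine sum_congr rfl fun m hm => ?_
          have hm : m ≤ k := Nat.lt_succ_iff.1 (mem_range.1 hm)
          rw [if_pos ⟨k - m, by omega⟩, ← pow_mul, show 2 * (k - m) = 2 * k - 2 * m by omega]
        · intro j hj
          by_cases hjk : j ≤ 2 * k
          · have hodd : Odd (2 * k - j) := (Nat.odd_sub hjk).2 <|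
              iff_of_false (Nat.not_odd_iff_even.2 (even_two_mul k)) (Nat.not_even_iff_odd.2 hj)
            rw [if_neg (Nat.not_even_iff_odd.2 hodd), mul_zero]
          · simp [Nat.choose_eq_zero_of_lt (show 2 * k < j by omega)]

theorem sum_sum_boolSign_mul_pow_two_mul_le (b : ι → ℝ) (s : Finset ι) (k : ℕ) :
    ∑ σ : ι → Bool, (∑ i ∈ s, boolSign (σ i) * b i) ^ (2 * k) ≤
      2 ^ Fintype.card ι * ((2 * k - 1)‼ * (∑ i ∈ s, b i ^ 2) ^ k) := by
  induction s using Finset.cons_induction generalizing k with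
  | empty => cases k <;> simp
  | cons a s ha ih =>
    set T := ∑ i ∈ s, b i ^ 2
    have hT : 0 ≤ T := sum_nonneg fun _ _ => sq_nonneg _
    rw [sum_sum_cons_boolSign_mul_pow_two_mul ha]
    calc _ ≤ ∑ m ∈ range (k + 1), ((2 * k).choose (2 * m) * (b a ^ 2) ^ (k - m)) *
            (2 ^ Fintype.card ι * ((2 * m - 1)‼ * T ^ m)) := by
          gcongr with m
          exact ih m
      _ ≤ ∑ m ∈ range (k + 1), 2 ^ Fintype.card ι * (2 * k - 1)‼ *
            (T ^ m * (b a ^ 2) ^ (k - m) * k.choose m) := by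
          refine sum_le_sum fun m hm => ?_
          have hc : ((2 * k).choose (2 * m) * (2 * m - 1)‼ : ℝ) ≤ k.choose m * (2 * k - 1)‼ := by
            exact_mod_cast Nat.choose_two_mul_mul_doubleFactorial_le
              (Nat.lt_succ_iff.1 (mem_range.1 hm))
          calc _ = 2 ^ Fintype.card ι * (T ^ m * (b a ^ 2) ^ (k - m)) *
                ((2 * k).choose (2 * m) * (2 * m - 1)‼ : ℝ) := by ring
            _ ≤ 2 ^ Fintype.card ι * (T ^ m * (b a ^ 2) ^ (k - m)) *
                (k.choose m * (2 * k - 1)‼ : ℝ) := by gcongr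
            _ = _ := by ring
      _ = 2 ^ Fintype.card ι * ((2 * k - 1)‼ * (∑ i ∈ cons a s ha, b i ^ 2) ^ k) := by
          rw [← mul_sum, sum_cons, add_comm (b a ^ 2), add_pow]
          ring

theorem sum_abs_sum_boolSign_mul_rpow_le (b : ι → ℝ) {l : ℝ} (hl : 1 ≤ l) :
    ∑ σ : ι → Bool, |∑ i, boolSign (σ i) * b i| ^ l ≤
      2 ^ Fintype.card ι * (2 * l * ∑ i, b i ^ 2) ^ (l / 2) := by
  set X : (ι → Bool) → ℝ := fun σ => ∑ i, boolSign (σ i) * b i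
  set S := ∑ i, b i ^ 2
  set N : ℝ := 2 ^ Fintype.card ι
  have hS : 0 ≤ S := sum_nonneg fun _ _ => sq_nonneg _
  have hN : 0 < N := by positivity
  have hl0 : 0 < l := by linarith
  set k := ⌈l / 2⌉₊
  have hlk : l ≤ 2 * k := by linarith [Nat.le_ceil (l / 2)]
  have hkl : (k : ℝ) ≤ 2 * l := by linarith [Nat.ceil_lt_add_one (by positivity : 0 ≤ l / 2)]
  have hk : 0 < (k : ℝ) := by linarith
  have hp : 1 ≤ 2 * k / l := (one_le_div hl0).2 hlk
  have hmoment : ∑ σ : ι → Bool, N⁻¹ * (|X σ| ^ l) ^ (2 * k / l) ≤ (k * S) ^ k := by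
    have hX : ∀ σ, (|X σ| ^ l) ^ (2 * k / l) = X σ ^ (2 * k) := fun σ => by
      rw [← Real.rpow_mul (abs_nonneg _), mul_div_cancel₀ _ hl0.ne',
        show (2 * k : ℝ) = (2 * k : ℕ) by push_cast; ring, Real.rpow_natCast, pow_abs,
        abs_of_nonneg (by rw [pow_mul]; positivity)]
    have hdf : ((2 * k - 1)‼ : ℝ) ≤ k ^ k := by
      exact_mod_cast Nat.doubleFactorial_two_mul_sub_one_le k
    rw [← mul_sum, inv_mul_le_iff₀ hN]
    simp only [hX]
    calc ∑ σ, X σ ^ (2 * k) ≤ N * ((2 * k - 1)‼ * S ^ k) :=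
          sum_sum_boolSign_mul_pow_two_mul_le b univ k
      _ ≤ N * (k * S) ^ k := by rw [mul_pow]; gcongr
  have hjensen := Real.rpow_arith_mean_le_arith_mean_rpow univ (fun _ => N⁻¹) (fun σ => |X σ| ^ l)
    (fun _ _ => inv_nonneg.2 hN.le) (by simp [N]) (fun _ _ => by positivity) hp
  have hmean : N⁻¹ * ∑ σ, |X σ| ^ l ≤ (k * S) ^ (l / 2) := by
    rw [mul_sum]
    calc _ ≤ ((k * S) ^ k) ^ (2 * k / l)⁻¹ :=
          (Real.le_rpow_inv_iff_of_pos (by positivity) (by positivity) (by positivity)).2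
            (hjensen.trans hmoment)
      _ = (k * S) ^ (l / 2) := by
          rw [← Real.rpow_natCast, ← Real.rpow_mul (by positivity), inv_div]
          congr 1
          field_simp
  calc ∑ σ, |X σ| ^ l = N * (N⁻¹ * ∑ σ, |X σ| ^ l) := by field_simp
    _ ≤ N * (2 * l * S) ^ (l / 2) := by gcongr; exact hmean.trans (by gcongr)

end Khintchine

section Comparison

variable {X ι : Type*} {F : ℝ → ℝ}

lemma iSup_abs_le_max [Nonempty X] {f : X → ℝ} (h₁ : BddAbove (Set.range f))
    (h₂ : BddAbove (Set.range fun x => -f x)) :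
    ⨆ x, |f x| ≤ max (⨆ x, f x) (⨆ x, -f x) :=
  ciSup_le fun x => by
    rw [abs_eq_max_neg]
    exact max_le_max (le_ciSup h₁ x) (le_ciSup h₂ x)

lemma add_map_iSup_abs_le [Nonempty X] (hF : Monotone F) {u v : X → ℝ}
    (h₁ : BddAbove (Set.range fun x => u x + v x)) (h₂ : BddAbove (Set.range fun x => u x - v x)) :
    F (⨆ x, u x + |v x|) + F (⨆ x, u x - |v x|) ≤ F (⨆ x, u x + v x) + F (⨆ x, u x - v x) := by
  have hplus : ⨆ x, u x + |v x| ≤ max (⨆ x, u x + v x) (⨆ x, u x - v x) := by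
    refine ciSup_le fun x => ?_
    rcases abs_cases (v x) with ⟨hv, _⟩ | ⟨hv, _⟩
    · rw [hv]; exact le_max_of_le_left (le_ciSup h₁ x)
    · rw [hv, ← sub_eq_add_neg]; exact le_max_of_le_right (le_ciSup h₂ x)
  have hminus : ⨆ x, u x - |v x| ≤ min (⨆ x, u x + v x) (⨆ x, u x - v x) :=
    ciSup_le fun x => le_min
      ((by linarith [neg_abs_le (v x)] : u x - |v x| ≤ u x + v x).trans (le_ciSup h₁ x))
      ((by linarith [le_abs_self (v x)] : u x - |v x| ≤ u x - v x).trans (le_ciSup h₂ x))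
  calc _ ≤ F (max (⨆ x, u x + v x) (⨆ x, u x - v x)) +
        F (min (⨆ x, u x + v x) (⨆ x, u x - v x)) := add_le_add (hF hplus) (hF hminus)
    _ = _ := by rw [hF.map_max, hF.map_min, max_add_min]

variable [Fintype ι] [DecidableEq ι]

lemma sum_map_iSup_abs_coord_le [Nonempty X] (hF : Monotone F) (a : ι)
    {u : (ι → Bool) → X → ℝ} (hu : ∀ σ, u (flipAt a σ) = u σ) (v : X → ℝ)
    (hb : ∀ σ, BddAbove (Set.range fun x => u σ x + boolSign (σ a) * v x)) :
    ∑ σ, F (⨆ x, u σ x + boolSign (σ a) * |v x|) ≤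
      ∑ σ, F (⨆ x, u σ x + boolSign (σ a) * v x) := by
  refine le_of_mul_le_mul_left ?_ two_pos
  rw [two_mul_sum_eq_sum_add_flipAt a, two_mul_sum_eq_sum_add_flipAt a]
  refine sum_le_sum fun σ _ => ?_
  have hb' := hb (flipAt a σ)
  have hbσ := hb σ
  simp only [hu, flipAt_apply_self, boolSign_not] at hb' ⊢
  cases hσa : σ a
  · simp only [hσa, boolSign_false, neg_neg, one_mul, neg_one_mul, ← sub_eq_add_neg] at hb' hbσ ⊢
    linarith [add_map_iSup_abs_le hF hb' hbσ]
  · simp only [hσa, boolSign_true, one_mul, neg_one_mul, ← sub_eq_add_neg] at hb' hbσ ⊢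
    exact add_map_iSup_abs_le hF hbσ hb'

lemma sum_map_iSup_abs_on_le [Nonempty X] (hF : Monotone F) (z : X → ι → ℝ)
    (hz : BddAbove (Set.range fun x => ∑ i, |z x i|)) (S : Finset ι) :
    ∑ σ : ι → Bool, F (⨆ x, ∑ i, boolSign (σ i) * if i ∈ S then |z x i| else z x i) ≤
      ∑ σ : ι → Bool, F (⨆ x, ∑ i, boolSign (σ i) * z x i) := by
  induction S using Finset.induction_on with
  | empty => simp
  | insert a S ha ih =>
    refine le_trans ?_ ih
    set u : (ι → Bool) → X → ℝ := fun σ x =>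
      ∑ i ∈ univ.erase a, boolSign (σ i) * if i ∈ S then |z x i| else z x i
    have hsplit : ∀ T : Finset ι, (∀ i ≠ a, i ∈ T ↔ i ∈ S) → ∀ σ x,
        ∑ i, boolSign (σ i) * (if i ∈ T then |z x i| else z x i) =
          u σ x + boolSign (σ a) * if a ∈ T then |z x a| else z x a := by
      intro T hT σ x
      rw [← add_sum_erase _ _ (mem_univ a), add_comm]
      congr 1
      exact sum_congr rfl fun i hi => by simp only [hT i (ne_of_mem_erase hi)]
    have hins := hsplit (insert a S) fun i hi => by simp [hi]
    have hS := hsplit S fun i _ => Iff.rfl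
    simp only [mem_insert_self, if_true, ha, if_false] at hins hS
    simp only [hins, hS]
    refine sum_map_iSup_abs_coord_le hF a (fun σ => funext fun x => sum_congr rfl fun i hi => ?_) _
      fun σ => hz.range_mono _ fun x => ?_
    · rw [flipAt_apply_of_ne (ne_of_mem_erase hi)]
    · rw [← hS]
      refine (sum_boolSign_mul_le _ _).trans_eq (sum_congr rfl fun i _ => ?_)
      split_ifs <;> simp

theorem sum_rpow_iSup_abs_le (z : X → ι → ℝ) (hz : BddAbove (Set.range fun x => ∑ i, |z x i|))
    {l : ℝ} (hl : 0 ≤ l) :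
    ∑ σ : ι → Bool, (⨆ x, |∑ i, boolSign (σ i) * (|z x i|)|) ^ l ≤
      2 * ∑ σ : ι → Bool, max (⨆ x, ∑ i, boolSign (σ i) * z x i) 0 ^ l := by
  rcases isEmpty_or_nonempty X with hX | hX
  · simp only [Real.iSup_of_isEmpty, max_self]
    have : ∑ _σ : ι → Bool, (0 : ℝ) ^ l ≥ 0 := sum_nonneg fun _ _ => Real.rpow_nonneg le_rfl _
    linarith
  set F : ℝ → ℝ := fun t => max t 0 ^ l
  have hF : Monotone F := fun s t hst =>
    Real.rpow_le_rpow (le_max_right _ _) (max_le_max_right 0 hst) hl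
  have hF0 : ∀ t, 0 ≤ F t := fun t => Real.rpow_nonneg (le_max_right _ _) _
  set h : (ι → Bool) → ℝ := fun σ => ⨆ x, ∑ i, boolSign (σ i) * |z x i|
  have hneg : ∀ (σ : ι → Bool) x,
      -∑ i, boolSign (σ i) * |z x i| = ∑ i, boolSign (!σ i) * |z x i| := by
    simp [sum_neg_distrib]
  have hbdd : ∀ σ : ι → Bool, BddAbove (Set.range fun x => ∑ i, boolSign (σ i) * |z x i|) :=
    fun σ => hz.range_mono _ fun x => (sum_boolSign_mul_le _ _).trans_eq (by simp)
  have habs : ∀ σ : ι → Bool,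
      (⨆ x, |∑ i, boolSign (σ i) * (|z x i|)|) ^ l ≤ F (h σ) + F (h (fun i => !σ i)) := by
    intro σ
    have hle := iSup_abs_le_max (hbdd σ) (by simpa only [hneg] using hbdd fun i => !σ i)
    simp only [hneg] at hle
    have h0 : 0 ≤ ⨆ x, |∑ i, boolSign (σ i) * (|z x i|)| := Real.iSup_nonneg fun _ => abs_nonneg _
    calc _ = F (⨆ x, |∑ i, boolSign (σ i) * (|z x i|)|) := by simp only [F, max_eq_left h0]
      _ ≤ F (max (h σ) (h (fun i => !σ i))) := hF hle
      _ ≤ F (h σ) + F (h (fun i => !σ i)) := by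
          rw [hF.map_max]
          exact max_le_add_of_nonneg (hF0 _) (hF0 _)
  have hnot : ∑ σ : ι → Bool, F (h (fun i => !σ i)) = ∑ σ, F (h σ) :=
    Equiv.sum_comp (Equiv.piCongrRight fun _ => Equiv.boolNot) (F ∘ h)
  calc _ ≤ ∑ σ : ι → Bool, (F (h σ) + F (h (fun i => !σ i))) := sum_le_sum fun σ _ => habs σ
    _ = 2 * ∑ σ, F (h σ) := by rw [sum_add_distrib, hnot]; ring
    _ ≤ _ := by
      have := sum_map_iSup_abs_on_le hF z hz univ
      simp only [mem_univ, if_true] at this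
      exact mul_le_mul_of_nonneg_left this zero_le_two

end Comparison

lemma max_iSup_dotProduct_rpow_le {X ι : Type*} [Fintype ι] {t : X → ι → ℝ}
    (ht : ∀ x, ∑ i, |t x i| ≤ 1) (g : ι → ℝ) {l : ℝ} (hl : 0 < l) :
    max (⨆ x, g ⬝ᵥ t x) 0 ^ l ≤ ∑ i, |g i| ^ l := by
  set G := (∑ i, |g i| ^ l) ^ l⁻¹
  have hsum : 0 ≤ ∑ i, |g i| ^ l := sum_nonneg fun _ _ => by positivity
  have hG : 0 ≤ G := by positivity
  have hg : ∀ i, |g i| ≤ G := fun i =>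
    (Real.le_rpow_inv_iff_of_pos (abs_nonneg _) hsum hl).2
      (single_le_sum (f := fun i => |g i| ^ l) (fun _ _ => by positivity) (mem_univ i))
  have hdot : ∀ x, g ⬝ᵥ t x ≤ G := fun x =>
    calc g ⬝ᵥ t x ≤ ∑ i, G * |t x i| := sum_le_sum fun i _ =>
          (le_abs_self _).trans (by rw [abs_mul]; gcongr; exact hg i)
      _ = G * ∑ i, |t x i| := by rw [mul_sum]
      _ ≤ G := mul_le_of_le_one_right hG (ht x)
  calc max (⨆ x, g ⬝ᵥ t x) 0 ^ l ≤ G ^ l :=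
        Real.rpow_le_rpow (le_max_right _ _) (max_le (Real.iSup_le hdot hG) hG) hl.le
    _ = ∑ i, |g i| ^ l := Real.rpow_inv_rpow hsum hl.ne'

lemma Matrix.mulVec_injective_of_rank_eq {m n : Type*} [Fintype n] {A : Matrix m n ℝ}
    (h : A.rank = Fintype.card n) : Function.Injective A.mulVec := by
  rw [mulVec_injective_iff, linearIndependent_iff_card_eq_finrank_span, Set.finrank,
    ← rank_eq_finrank_span_cols, h]

lemma isUnit_det_transpose_mul_diagonal_mul {m n : Type*} [Fintype m] [Fintype n] [DecidableEq m]
    [DecidableEq n] {A : Matrix m n ℝ} (hA : A.rank = Fintype.card n) {w : m → ℝ}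
    (hw : ∀ i, 0 < w i) : IsUnit (Aᵀ * diagonal w * A).det := by
  rw [← isUnit_iff_isUnit_det, ← conjTranspose_eq_transpose_of_trivial]
  exact ((PosDef.diagonal hw).conjTranspose_mul_mul_same (mulVec_injective_of_rank_eq hA)).isUnit

lemma Matrix.inv_diagonal_of_ne_zero {m : Type*} [Fintype m] [DecidableEq m] {w : m → ℝ}
    (hw : ∀ i, w i ≠ 0) : (diagonal w)⁻¹ = diagonal w⁻¹ := by
  refine inv_eq_left_inv ?_
  rw [diagonal_mul_diagonal, ← diagonal_one]
  exact congrArg diagonal (funext fun i => inv_mul_cancel₀ (hw i))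

lemma isUnit_det_transpose_mul_inv_diagonal_mul {m n : Type*} [Fintype m] [Fintype n]
    [DecidableEq m] [DecidableEq n] {A : Matrix m n ℝ} (hA : A.rank = Fintype.card n) {w : m → ℝ}
    (hw : ∀ i, 0 < w i) : IsUnit (Aᵀ * (diagonal w)⁻¹ * A).det := by
  rw [inv_diagonal_of_ne_zero fun i => (hw i).ne']
  exact isUnit_det_transpose_mul_diagonal_mul hA (w := w⁻¹) fun i => inv_pos.2 (hw i)

lemma sum_sq_apply_le_of_mul_diagonal_mul_self {m : Type*} [Fintype m] [DecidableEq m]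
    {P : Matrix m m ℝ} (hPt : Pᵀ = P) {w : m → ℝ} (hw : ∀ i, 0 < w i)
    (hP : P * diagonal w⁻¹ * P = P) {U : ℝ} (hU : ∀ i, w i ≤ U) (j : m) :
    ∑ i, P i j ^ 2 ≤ U * P j j := by
  have hjj : P j j = ∑ i, (w i)⁻¹ * P i j ^ 2 := by
    conv_lhs => rw [← hP]
    rw [mul_apply]
    refine sum_congr rfl fun i _ => ?_
    rw [mul_diagonal, Pi.inv_apply, ← transpose_apply P j i, hPt]
    ring
  rw [hjj, mul_sum]
  refine sum_le_sum fun i _ => ?_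
  have hwi := hw i
  calc P i j ^ 2 = w i * ((w i)⁻¹ * P i j ^ 2) := by field_simp
    _ ≤ U * ((w i)⁻¹ * P i j ^ 2) := by gcongr; exact hU i

section ProjKernel

variable {m n : Type*} [Fintype m] [Fintype n] [DecidableEq n]

/-- `projKernel A D * D` is the `D`-orthogonal projection onto the column space of `A`; for
`D = W⁻¹` it is the matrix `Π = A (AᵀW⁻¹A)⁻¹ AᵀW⁻¹`. -/
noncomputable def projKernel (A : Matrix m n ℝ) (D : Matrix m m ℝ) : Matrix m m ℝ :=
  A * (Aᵀ * D * A)⁻¹ * Aᵀ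

variable (A : Matrix m n ℝ) (D : Matrix m m ℝ)

lemma projKernel_apply (i j : m) : projKernel A D i j = A i ⬝ᵥ (Aᵀ * D * A)⁻¹ *ᵥ A j := by
  rw [projKernel, dotProduct_mulVec, mul_apply]
  rfl

variable {A D}

lemma projKernel_mul_mul (h : IsUnit (Aᵀ * D * A).det) : projKernel A D * D * A = A := by
  calc projKernel A D * D * A = A * (Aᵀ * D * A)⁻¹ * (Aᵀ * D * A) := by
        simp only [projKernel, Matrix.mul_assoc]
    _ = A := nonsing_inv_mul_cancel_right _ _ h

lemma projKernel_mul_mul_projKernel (h : IsUnit (Aᵀ * D * A).det) :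
    projKernel A D * D * projKernel A D = projKernel A D := by
  calc projKernel A D * D * projKernel A D = projKernel A D * D * A * (Aᵀ * D * A)⁻¹ * Aᵀ := by
        simp only [projKernel, Matrix.mul_assoc]
    _ = projKernel A D := by rw [projKernel_mul_mul h, projKernel]

lemma transpose_projKernel (hD : Dᵀ = D) : (projKernel A D)ᵀ = projKernel A D := by
  rw [projKernel, transpose_mul, transpose_mul, transpose_transpose, transpose_nonsing_inv,
    transpose_mul, transpose_mul, transpose_transpose, hD]
  simp only [Matrix.mul_assoc]

end ProjKernel

lemma sum_sq_projKernel_mul_inv_diagonal_apply_le {m n : Type*} [Fintype m] [Fintype n]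
    [DecidableEq m] [DecidableEq n] {A : Matrix m n ℝ} (hA : A.rank = Fintype.card n)
    {w : m → ℝ} (hw : ∀ i, 0 < w i)
    (hlew : ∀ i, A i ⬝ᵥ (Aᵀ * (diagonal w)⁻¹ * A)⁻¹ *ᵥ A i = w i ^ 2)
    {U : ℝ} (hU : ∀ i, w i ≤ U) (j : m) :
    ∑ i, (projKernel A (diagonal w)⁻¹ * (diagonal w)⁻¹) i j ^ 2 ≤ U := by
  have hM := isUnit_det_transpose_mul_inv_diagonal_mul hA hw
  rw [inv_diagonal_of_ne_zero fun i => (hw i).ne'] at hM hlew ⊢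
  have hcol := sum_sq_apply_le_of_mul_diagonal_mul_self
    (transpose_projKernel (diagonal_transpose _)) hw (projKernel_mul_mul_projKernel hM) hU j
  rw [projKernel_apply, hlew] at hcol
  have hwj := (hw j).ne'
  simp only [mul_diagonal, Pi.inv_apply, mul_pow, ← sum_mul]
  calc (∑ i, projKernel A (diagonal w⁻¹) i j ^ 2) * (w j)⁻¹ ^ 2 ≤ U * w j ^ 2 * (w j)⁻¹ ^ 2 := by
        gcongr
    _ = U := by field_simp

lemma max_iSup_sum_boolSign_mul_mulVec_rpow_le {m n : Type*} [Fintype m] [Fintype n]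
    {A : Matrix m n ℝ} {Q : Matrix m m ℝ} (hQA : Q * A = A) (σ : m → Bool) {l : ℝ} (hl : 0 < l) :
    max (⨆ x : {x : n → ℝ // ∑ i, |(A *ᵥ x) i| = 1}, ∑ i, boolSign (σ i) * (A *ᵥ x.1) i) 0 ^ l ≤
      ∑ j, |∑ i, boolSign (σ i) * Q i j| ^ l := by
  have hdot : ∀ x : n → ℝ, ∑ i, boolSign (σ i) * (A *ᵥ x) i = (boolSign ∘ σ) ᵥ* Q ⬝ᵥ A *ᵥ x :=
    fun x => by
      rw [← dotProduct_mulVec, mulVec_mulVec, hQA]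
      rfl
  simp only [hdot]
  exact max_iSup_dotProduct_rpow_le (fun x => x.2.le) _ hl

lemma sum_sum_abs_sum_boolSign_mul_rpow_le {m k : Type*} [Fintype m] [DecidableEq m] [Fintype k]
    {Q : Matrix m k ℝ} {U : ℝ} (hQ : ∀ j, ∑ i, Q i j ^ 2 ≤ U) {l : ℝ} (hl : 1 ≤ l) :
    ∑ σ : m → Bool, ∑ j, |∑ i, boolSign (σ i) * Q i j| ^ l ≤
      Fintype.card k * (2 ^ Fintype.card m * (2 * l * U) ^ (l / 2)) := by
  rw [sum_comm]
  calc _ ≤ ∑ _j : k, 2 ^ Fintype.card m * (2 * l * U) ^ (l / 2) :=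
        sum_le_sum fun j _ => (sum_abs_sum_boolSign_mul_rpow_le _ hl).trans (by gcongr; exact hQ j)
    _ = _ := by rw [sum_const, card_univ, nsmul_eq_mul]

theorem stmt17 : ∃ C : ℝ, 0 < C ∧
    ∀ (n d : ℕ) (A : Matrix (Fin n) (Fin d) ℝ), A.rank = d →
    ∀ w : Fin n → ℝ, (∀ i, 0 < w i) →
    (∀ i, A i ⬝ᵥ (Aᵀ * (Matrix.diagonal w)⁻¹ * A)⁻¹.mulVec (A i) = w i ^ 2) →
    ∀ U : ℝ, (∀ i, w i ≤ U) →
    ∀ l : ℝ, 1 ≤ l →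
    (∑ σ : Fin n → Bool,
        (⨆ x : {x : Fin d → ℝ // (∑ i, |A.mulVec x i|) = 1},
          |∑ i, (if σ i then (1 : ℝ) else -1) * (|A i ⬝ᵥ x.1|)|) ^ l) / 2 ^ n
      ≤ 2 * n * (C * l * U) ^ (l / 2) := by
  refine ⟨2, two_pos, fun n d A hrank w hw hlew U hU l hl => ?_⟩
  have hA : A.rank = Fintype.card (Fin d) := hrank.trans (Fintype.card_fin d).symm
  have hb : BddAbove (Set.range fun x : {x : Fin d → ℝ // (∑ i, |A.mulVec x i|) = 1} =>
      ∑ i, |(A *ᵥ x.1) i|) := ⟨1, by rintro _ ⟨x, rfl⟩; exact x.2.le⟩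
  rw [div_le_iff₀ (by positivity)]
  calc _ ≤ 2 * ∑ σ : Fin n → Bool, max (⨆ x : {x : Fin d → ℝ // (∑ i, |A.mulVec x i|) = 1},
          ∑ i, boolSign (σ i) * (A *ᵥ x.1) i) 0 ^ l := sum_rpow_iSup_abs_le _ hb (by linarith)
    _ ≤ 2 * ∑ σ : Fin n → Bool, ∑ j,
          |∑ i, boolSign (σ i) * (projKernel A (diagonal w)⁻¹ * (diagonal w)⁻¹) i j| ^ l := by
        gcongr with σ
        exact max_iSup_sum_boolSign_mul_mulVec_rpow_le
          (projKernel_mul_mul (isUnit_det_transpose_mul_inv_diagonal_mul hA hw)) σ (by linarith)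
    _ ≤ 2 * (n * (2 ^ n * (2 * l * U) ^ (l / 2))) := by
        gcongr
        simpa using sum_sum_abs_sum_boolSign_mul_rpow_le
          (sum_sq_projKernel_mul_inv_diagonal_apply_le hA hw hlew hU) hl
    _ = 2 * n * (2 * l * U) ^ (l / 2) * 2 ^ n := by ring
end

section
/- (Khintchine moment inequality) Let σ_1,…,σ_n be independent Rademacher (±1) random variables and x_1,…,x_n real numbers. Then for any real l ≥ 1 there is an absolute constant C such that E[|Σ_i σ_i x_i|^l] ≤ (C·l·Σ_i x_i²)^{l/2}. -/
/-!
Summing `exp (∑ i, σᵢ yᵢ)` over all sign patterns factorizes into `∏ i, 2 cosh yᵢ`, which is at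
most `2ⁿ exp (∑ i, yᵢ² / 2)`. Applying `z ^ l ≤ exp (l (z - 1))` to `z = |S| / u` bounds
`∑ σ, |S σ| ^ l` by `2 · 2ⁿ · uˡ · exp (l² A / (2u²) - l)` with `A = ∑ i, xᵢ²`, and the choice
`u = √(l A)` turns this into `E |S| ^ l ≤ 2 (l A / e) ^ (l / 2)`.
-/

open Real Finset

def signedSum {ι : Type*} [Fintype ι] (x : ι → ℝ) (σ : ι → Bool) : ℝ :=
  ∑ i, (if σ i then 1 else -1) * x i

theorem signedSum_smul {ι : Type*} [Fintype ι] (t : ℝ) (x : ι → ℝ) (σ : ι → Bool) :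
    signedSum (t • x) σ = t * signedSum x σ := by
  simp only [signedSum, mul_sum, Pi.smul_apply, smul_eq_mul]
  exact sum_congr rfl fun i _ => by ring

theorem rpow_le_exp_mul_sub_one {z l : ℝ} (hz : 0 ≤ z) (hl : 0 ≤ l) :
    z ^ l ≤ exp (l * (z - 1)) :=
  calc z ^ l ≤ exp (z - 1) ^ l := by
        gcongr; linarith [add_one_le_exp (z - 1)]
    _ = exp (l * (z - 1)) := by rw [← exp_mul, mul_comm]

section

variable {ι : Type*} [Fintype ι] [DecidableEq ι]

theorem sum_exp_signedSum (y : ι → ℝ) :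
    ∑ σ : ι → Bool, exp (signedSum y σ) = ∏ i, 2 * cosh (y i) := by
  simp only [signedSum, exp_sum]
  rw [← Fintype.prod_sum fun i (b : Bool) => exp ((if b then 1 else -1) * y i)]
  refine prod_congr rfl fun i _ => ?_
  rw [Fintype.sum_bool, cosh_eq]
  simp only [if_true, Bool.false_eq_true, if_false, one_mul, neg_one_mul]
  ring

theorem sum_exp_signedSum_le (y : ι → ℝ) :
    ∑ σ : ι → Bool, exp (signedSum y σ) ≤ 2 ^ Fintype.card ι * exp ((∑ i, y i ^ 2) / 2) := by
  calc ∑ σ : ι → Bool, exp (signedSum y σ) = ∏ i, 2 * cosh (y i) := sum_exp_signedSum y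
    _ ≤ ∏ i, 2 * exp (y i ^ 2 / 2) :=
      prod_le_prod (fun i _ => by positivity) fun i _ => by gcongr; exact cosh_le_exp_half_sq _
    _ = 2 ^ Fintype.card ι * exp ((∑ i, y i ^ 2) / 2) := by
      rw [prod_mul_distrib, prod_const, card_univ, sum_div, exp_sum]

theorem sum_exp_mul_abs_signedSum_le (t : ℝ) (x : ι → ℝ) :
    ∑ σ : ι → Bool, exp (t * |signedSum x σ|)
      ≤ 2 * 2 ^ Fintype.card ι * exp (t ^ 2 * (∑ i, x i ^ 2) / 2) := by
  have hsq (s : ℝ) : ∑ i, (s • x) i ^ 2 = s ^ 2 * ∑ i, x i ^ 2 := by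
    simp only [mul_sum, Pi.smul_apply, smul_eq_mul, mul_pow]
  have h_abs (σ : ι → Bool) : exp (t * |signedSum x σ|)
      ≤ exp (signedSum (t • x) σ) + exp (signedSum ((-t) • x) σ) := by
    rw [signedSum_smul, signedSum_smul]
    rcases abs_choice (signedSum x σ) with h | h <;> rw [h]
    · exact le_add_of_nonneg_right (exp_pos _).le
    · rw [neg_mul, mul_neg]; exact le_add_of_nonneg_left (exp_pos _).le
  calc ∑ σ : ι → Bool, exp (t * |signedSum x σ|)
      ≤ ∑ σ : ι → Bool, exp (signedSum (t • x) σ)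
        + ∑ σ : ι → Bool, exp (signedSum ((-t) • x) σ) := by
        rw [← sum_add_distrib]; exact sum_le_sum fun σ _ => h_abs σ
    _ ≤ 2 ^ Fintype.card ι * exp ((∑ i, (t • x) i ^ 2) / 2)
        + 2 ^ Fintype.card ι * exp ((∑ i, ((-t) • x) i ^ 2) / 2) :=
        add_le_add (sum_exp_signedSum_le _) (sum_exp_signedSum_le _)
    _ = 2 * 2 ^ Fintype.card ι * exp (t ^ 2 * (∑ i, x i ^ 2) / 2) := by
        rw [hsq, hsq, neg_sq]; ring

theorem sum_abs_signedSum_rpow_le_of_pos {u l : ℝ} (hu : 0 < u) (hl : 0 ≤ l) (x : ι → ℝ) :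
    ∑ σ : ι → Bool, |signedSum x σ| ^ l
      ≤ 2 * 2 ^ Fintype.card ι * u ^ l * exp ((l / u) ^ 2 * (∑ i, x i ^ 2) / 2 - l) := by
  have h_pt (s : ℝ) : |s| ^ l ≤ u ^ l * exp (-l) * exp (l / u * |s|) := by
    calc |s| ^ l = u ^ l * (|s| / u) ^ l := by
          rw [div_rpow (abs_nonneg s) hu.le, mul_div_cancel₀ _ (rpow_pos_of_pos hu l).ne']
      _ ≤ u ^ l * exp (l * (|s| / u - 1)) := by
          gcongr; exact rpow_le_exp_mul_sub_one (by positivity) hl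
      _ = u ^ l * exp (-l) * exp (l / u * |s|) := by
          rw [mul_assoc, ← exp_add]; ring_nf
  calc ∑ σ : ι → Bool, |signedSum x σ| ^ l
      ≤ u ^ l * exp (-l) * ∑ σ : ι → Bool, exp (l / u * |signedSum x σ|) := by
        rw [mul_sum]; exact sum_le_sum fun σ _ => h_pt _
    _ ≤ u ^ l * exp (-l) * (2 * 2 ^ Fintype.card ι * exp ((l / u) ^ 2 * (∑ i, x i ^ 2) / 2)) := by
        gcongr; exact sum_exp_mul_abs_signedSum_le _ x
    _ = 2 * 2 ^ Fintype.card ι * u ^ l * exp ((l / u) ^ 2 * (∑ i, x i ^ 2) / 2 - l) := by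
        rw [sub_eq_add_neg, exp_add]; ring

theorem sum_abs_signedSum_rpow_le {l : ℝ} (hl : 0 < l) (x : ι → ℝ) :
    ∑ σ : ι → Bool, |signedSum x σ| ^ l
      ≤ 2 * 2 ^ Fintype.card ι * (l * (∑ i, x i ^ 2) / exp 1) ^ (l / 2) := by
  set A := ∑ i, x i ^ 2
  have hA : 0 ≤ A := sum_nonneg fun i _ => sq_nonneg (x i)
  rcases hA.eq_or_lt with hA_zero | hA_pos
  · have hx : ∀ i, x i = 0 := fun i => by
      simpa using
        (sum_eq_zero_iff_of_nonneg fun i _ => sq_nonneg (x i)).mp hA_zero.symm i (mem_univ i)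
    have hS (σ : ι → Bool) : signedSum x σ = 0 := by simp [signedSum, hx]
    simp only [hS, abs_zero, zero_rpow hl.ne', sum_const_zero]
    positivity
  · have hlA : 0 < l * A := mul_pos hl hA_pos
    refine (sum_abs_signedSum_rpow_le_of_pos (sqrt_pos.mpr hlA) hl.le x).trans_eq ?_
    have h_exp : (l / sqrt (l * A)) ^ 2 * A / 2 - l = -(l / 2) := by
      rw [div_pow, sq_sqrt hlA.le]; field_simp; ring
    rw [h_exp, exp_neg, div_rpow hlA.le (exp_pos 1).le, exp_one_rpow, sqrt_eq_rpow,
      ← rpow_mul hlA.le]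
    ring_nf

end

theorem stmt18 : ∃ C : ℝ, 0 < C ∧
    ∀ (n : ℕ) (x : Fin n → ℝ) (l : ℝ), 1 ≤ l →
      (∑ σ : Fin n → Bool, |∑ i, (if σ i then (1 : ℝ) else -1) * x i| ^ l) / 2 ^ n
        ≤ (C * l * ∑ i, (x i) ^ 2) ^ (l / 2) := by
  refine ⟨4 / exp 1, by positivity, fun n x l hl => ?_⟩
  have hl0 : 0 < l := one_pos.trans_le hl
  have hy : 0 ≤ l * (∑ i, x i ^ 2) / exp 1 := by positivity
  have h_two : 2 ≤ (4 : ℝ) ^ (l / 2) := by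
    calc (2 : ℝ) ≤ 2 ^ l := by simpa using rpow_le_rpow_of_exponent_le one_le_two hl
      _ = 4 ^ (l / 2) := by
        rw [show (4 : ℝ) = 2 ^ (2 : ℝ) by norm_num, ← rpow_mul two_pos.le]; ring_nf
  calc (∑ σ : Fin n → Bool, |signedSum x σ| ^ l) / 2 ^ n
      ≤ 2 * (l * (∑ i, x i ^ 2) / exp 1) ^ (l / 2) := by
        rw [div_le_iff₀ (by positivity)]
        refine (sum_abs_signedSum_rpow_le hl0 x).trans_eq ?_
        rw [Fintype.card_fin]; ring
    _ ≤ 4 ^ (l / 2) * (l * (∑ i, x i ^ 2) / exp 1) ^ (l / 2) := by gcongr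
    _ = (4 / exp 1 * l * ∑ i, x i ^ 2) ^ (l / 2) := by
        rw [← mul_rpow (by norm_num) hy]; ring_nf
end
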